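/- arXiv:1405.4093 — 2 statements merged into one kernel-verified Lean document; each statement's English description precedes it below -/
import Mathlib

section
/- Let Γ be the fine Z^{k+1}-grading on the Heisenberg algebra H_n (n = 2k+1) in which each of the basis vectors e_1,…,e_k,ê_1,…,ê_k,z spans a homogeneous component. Then the Weyl group W(Γ) = Aut(Γ)/Stab(Γ) is isomorphic to Z_2^k ⋊ S_k, where S_k acts by permuting the factors of Z_2^k. -/
def HeisPair {k : ℕ} (p q : (Fin k × Bool) ⊕ Unit) : Prop :=
  ∃ i : Fin k, (p = Sum.inl (i, false) ∧ q = Sum.inl (i, true)) ∨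
    (p = Sum.inl (i, true) ∧ q = Sum.inl (i, false))

/-!
An automorphism `f` permuting the lines `F ∙ b p` induces a permutation `π` of the index set.
Since `⁅b p, b q⁆ ≠ 0` exactly when `{p, q} = {e_i, ê_i}`, `π` preserves this pairing, and
the pairing-preserving permutations are exactly the images of the faithful action of
`ℤ₂^k ⋊ S_k` on the indices (`S_k` permutes the pairs, the `ℤ₂`-factors swap within them).
This gives `θ`, whose kernel consists of the `f` with `π = 1`, i.e. `Stab(Γ)`. Conversely each
such permutation is realised by `b p ↦ ±b (π p)`, with signs chosen so that `⁅e_i, ê_i⁆ = z`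
is preserved.
-/

open Function Equiv

theorem Equiv.Perm.sum_ext_of_subsingleton {α β : Type*} [Subsingleton β]
    {ρ ρ' : Perm (α ⊕ β)}
    (h : ∀ a, ρ (.inl a) = ρ' (.inl a)) : ρ = ρ' := by
  suffices hfix : ∀ b, (ρ'⁻¹ * ρ) (.inr b) = .inr b by
    ext (a | b)
    · rw [h]
    · simpa [Perm.inv_def, symm_apply_eq] using hfix b
  intro b
  rcases hb : (ρ'⁻¹ * ρ) (.inr b) with a | b'
  · have : (ρ'⁻¹ * ρ) (.inl a) = .inl a := by simp [Perm.inv_def, h]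
    exact absurd ((ρ'⁻¹ * ρ).injective (hb.trans this.symm)) Sum.inr_ne_inl
  · rw [Subsingleton.elim b' b]

section ComponentPermuting

variable {R M ι : Type*} [Semiring R] [AddCommMonoid M] [Module R M] [Finite ι]
  {C : ι → Submodule R M}

theorem exists_perm_map_eq (hC : Injective C) {f : M ≃ₗ[R] M}
    (hf : ∀ p, ∃ q, (C p).map (f : M →ₗ[R] M) = C q) :
    ∃ π : Perm ι, ∀ p, (C p).map (f : M →ₗ[R] M) = C (π p) := by
  choose π hπ using hf
  have hπ_inj : Injective π := fun p p' h =>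
    hC <| Submodule.map_injective_of_injective f.injective <| by rw [hπ, hπ, h]
  exact ⟨.ofBijective π (Finite.injective_iff_bijective.mp hπ_inj), hπ⟩

def componentPermuting (hC : Injective C) : Subgroup (M ≃ₗ[R] M) where
  carrier := {f | ∀ p, ∃ q, (C p).map (f : M →ₗ[R] M) = C q}
  mul_mem' {f g} hf hg p := by
    obtain ⟨q, hq⟩ := hg p
    obtain ⟨r, hr⟩ := hf q
    refine ⟨r, ?_⟩
    rw [LinearEquiv.mul_eq_trans, LinearEquiv.coe_trans, Submodule.map_comp, hq, hr]
  one_mem' p := ⟨p, Submodule.map_id _⟩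
  inv_mem' {f} hf q := by
    obtain ⟨π, hπ⟩ := exists_perm_map_eq hC hf
    exact ⟨π.symm q, (Submodule.map_symm_eq_iff f).mpr (by rw [hπ, π.apply_symm_apply])⟩

noncomputable def componentPerm (hC : Injective C) (f : componentPermuting hC) : Perm ι :=
  (exists_perm_map_eq hC f.2).choose

theorem map_eq_componentPerm (hC : Injective C) (f : componentPermuting hC) (p : ι) :
    (C p).map ((f : M ≃ₗ[R] M) : M →ₗ[R] M) = C (componentPerm hC f p) :=
  (exists_perm_map_eq hC f.2).choose_spec p

theorem componentPerm_apply_eq_iff (hC : Injective C) (f : componentPermuting hC) {p q : ι} :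
    componentPerm hC f p = q ↔ (C p).map ((f : M ≃ₗ[R] M) : M →ₗ[R] M) = C q := by
  rw [map_eq_componentPerm, hC.eq_iff]

noncomputable def componentPermHom (hC : Injective C) : componentPermuting hC →* Perm ι where
  toFun := componentPerm hC
  map_one' := Equiv.ext fun p => (componentPerm_apply_eq_iff hC 1).mpr (Submodule.map_id _)
  map_mul' f g := Equiv.ext fun p => (componentPerm_apply_eq_iff hC _).mpr <| by
    rw [Subgroup.coe_mul, LinearEquiv.mul_eq_trans, LinearEquiv.coe_trans, Submodule.map_comp,
      map_eq_componentPerm, map_eq_componentPerm, Perm.mul_apply]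

theorem componentPermHom_apply (hC : Injective C) (f : componentPermuting hC) :
    componentPermHom hC f = componentPerm hC f := rfl

theorem componentPermHom_eq_one_iff (hC : Injective C) (f : componentPermuting hC) :
    componentPermHom hC f = 1 ↔ ∀ p, (C p).map ((f : M ≃ₗ[R] M) : M →ₗ[R] M) = C p := by
  simp only [Equiv.ext_iff, componentPermHom_apply, Perm.one_apply, componentPerm_apply_eq_iff]

end ComponentPermuting

section LieAut

variable (R L : Type*) [CommRing R] [LieRing L] [LieAlgebra R L]

def lieAutSubgroup : Subgroup (L ≃ₗ[R] L) where
  carrier := {f | ∀ x y, f ⁅x, y⁆ = ⁅f x, f y⁆}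
  mul_mem' {f g} hf hg x y := by
    change f (g _) = ⁅f (g x), f (g y)⁆
    rw [hg, hf]
  one_mem' _ _ := rfl
  inv_mem' {f} hf x y := f.injective <| by
    change f (f.symm _) = f ⁅f.symm x, f.symm y⁆
    rw [hf, f.apply_symm_apply, f.apply_symm_apply, f.apply_symm_apply]

variable {R L}

theorem Module.Basis.map_lie_of_map_lie_basis {ι L' : Type*} [LieRing L'] [LieAlgebra R L']
    (b : Module.Basis ι R L) (f : L →ₗ[R] L')
    (h : ∀ p q, f ⁅b p, b q⁆ = ⁅f (b p), f (b q)⁆) (x y : L) :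
    f ⁅x, y⁆ = ⁅f x, f y⁆ := by
  have key := LinearMap.ext_basis b b
    (B := (LieModule.toEnd R L L : L →ₗ[R] Module.End R L).compr₂ f)
    (B' := (LieModule.toEnd R L' L' : L' →ₗ[R] Module.End R L').compl₁₂ f f) h
  exact LinearMap.congr_fun₂ key x y

end LieAut

section Hyperoctahedral

def boolFlip : Multiplicative (ZMod 2) →* Perm Bool where
  toFun x := if x = 1 then 1 else boolNot
  map_one' := rfl
  map_mul' := by decide

theorem boolFlip_not (x : Multiplicative (ZMod 2)) (β : Bool) :
    boolFlip x (!β) = !boolFlip x β := by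
  revert x β; decide

theorem boolFlip_apply_of_ne_one {x : Multiplicative (ZMod 2)} (hx : x ≠ 1) (β : Bool) :
    boolFlip x β = !β := by
  revert x β; decide

theorem boolFlip_false_eq_false_iff {x : Multiplicative (ZMod 2)} :
    boolFlip x false = false ↔ x = 1 := by
  revert x; decide

theorem exists_boolFlip_false_eq (γ : Bool) :
    ∃ x : Multiplicative (ZMod 2), boolFlip x false = γ := by
  revert γ; decide

def permArrowMulAut (ι M : Type*) [Monoid M] : Perm ι →* MulAut (ι → M) where
  toFun σ := { toEquiv := σ.arrowCongr (Equiv.refl M), map_mul' := fun _ _ => rfl }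
  map_one' := rfl
  map_mul' _ _ := rfl

theorem permArrowMulAut_apply {ι M : Type*} [Monoid M] (σ : Perm ι) (x : ι → M) (i : ι) :
    permArrowMulAut ι M σ x i = x (σ⁻¹ i) := rfl

variable (k : ℕ)

abbrev Hyperoctahedral :=
  (Fin k → Multiplicative (ZMod 2)) ⋊[permArrowMulAut (Fin k) (Multiplicative (ZMod 2))]
    Perm (Fin k)

def pairFlipHom : (Fin k → Multiplicative (ZMod 2)) →* Perm ((Fin k × Bool) ⊕ Unit) where
  toFun n := (Equiv.prodCongrRight fun i => boolFlip (n i)).sumCongr (Equiv.refl Unit)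
  map_one' := by ext ⟨⟨i, β⟩ | u⟩ <;> simp
  map_mul' n n' := by ext ⟨⟨i, β⟩ | u⟩ <;> simp

def pairPermHom : Perm (Fin k) →* Perm ((Fin k × Bool) ⊕ Unit) where
  toFun σ := (σ.prodCongr (Equiv.refl Bool)).sumCongr (Equiv.refl Unit)
  map_one' := by ext ⟨⟨i, β⟩ | u⟩ <;> simp
  map_mul' σ τ := by ext ⟨⟨i, β⟩ | u⟩ <;> simp

def signedPerm : Hyperoctahedral k →* Perm ((Fin k × Bool) ⊕ Unit) :=
  SemidirectProduct.lift (pairFlipHom k) (pairPermHom k) fun σ => by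
    ext n ⟨⟨i, β⟩ | u⟩ <;> simp [pairFlipHom, pairPermHom, permArrowMulAut_apply]

variable {k}

@[simp]
theorem signedPerm_inl (g : Hyperoctahedral k) (i : Fin k) (β : Bool) :
    signedPerm k g (.inl (i, β)) = .inl (g.right i, boolFlip (g.left (g.right i)) β) :=
  rfl

@[simp]
theorem signedPerm_inr (g : Hyperoctahedral k) (u : Unit) : signedPerm k g (.inr u) = .inr u :=
  rfl

end Hyperoctahedral

section HeisPair

variable {k : ℕ}

theorem heisPair_iff {p q : (Fin k × Bool) ⊕ Unit} :
    HeisPair p q ↔ ∃ i β, p = .inl (i, β) ∧ q = .inl (i, !β) := by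
  constructor
  · rintro ⟨i, ⟨rfl, rfl⟩ | ⟨rfl, rfl⟩⟩
    exacts [⟨i, false, rfl, rfl⟩, ⟨i, true, rfl, rfl⟩]
  · rintro ⟨i, (_ | _), rfl, rfl⟩
    exacts [⟨i, .inl ⟨rfl, rfl⟩⟩, ⟨i, .inr ⟨rfl, rfl⟩⟩]

theorem signedPerm_injective : Injective (signedPerm k) := by
  refine (injective_iff_map_eq_one _).mpr fun g hg => ?_
  have hi (i : Fin k) := congrArg (· (.inl (i, false))) hg
  simp only [signedPerm_inl, Perm.one_apply, Sum.inl.injEq, Prod.mk.injEq,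
    boolFlip_false_eq_false_iff] at hi
  refine SemidirectProduct.ext (funext fun i => ?_) (Equiv.ext fun i => (hi i).1)
  simpa [(hi i).1] using (hi i).2

theorem HeisPair.map_signedPerm {p q : (Fin k × Bool) ⊕ Unit} (h : HeisPair p q)
    (g : Hyperoctahedral k) :
    HeisPair (signedPerm k g p) (signedPerm k g q) := by
  obtain ⟨i, β, rfl, rfl⟩ := heisPair_iff.mp h
  exact heisPair_iff.mpr ⟨_, _, signedPerm_inl g i β, by rw [signedPerm_inl, boolFlip_not]⟩

theorem heisPair_signedPerm_iff {p q : (Fin k × Bool) ⊕ Unit} (g : Hyperoctahedral k) :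
    HeisPair (signedPerm k g p) (signedPerm k g q) ↔ HeisPair p q := by
  refine ⟨fun h => ?_, (·.map_signedPerm g)⟩
  simpa [← Perm.mul_apply, ← map_mul] using h.map_signedPerm g⁻¹

theorem mem_range_signedPerm {π : Perm ((Fin k × Bool) ⊕ Unit)}
    (hπ : ∀ p q, HeisPair p q → HeisPair (π p) (π q)) : π ∈ (signedPerm k).range := by
  have hpair (i : Fin k) : ∃ j x, ∀ β, π (.inl (i, β)) = .inl (j, boolFlip x β) := by
    obtain ⟨j, γ, h₀, h₁⟩ :=
      heisPair_iff.mp (hπ _ _ (heisPair_iff.mpr ⟨i, false, rfl, rfl⟩))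
    obtain ⟨x, hx⟩ := exists_boolFlip_false_eq γ
    refine ⟨j, x, fun β => ?_⟩
    cases β
    · rw [h₀, hx]
    · rwa [← hx, ← boolFlip_not] at h₁
  choose τ x hτx using hpair
  have hτ : Injective τ := fun i i' h => by
    have hπ_eq : π (.inl (i, (boolFlip (x i)).symm false)) =
        π (.inl (i', (boolFlip (x i')).symm false)) := by
      simp only [hτx, apply_symm_apply, h]
    exact (Prod.ext_iff.mp (Sum.inl_injective (π.injective hπ_eq))).1
  let σ : Perm (Fin k) := .ofBijective τ (Finite.injective_iff_bijective.mp hτ)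
  refine ⟨⟨fun j => x (σ.symm j), σ⟩, Perm.sum_ext_of_subsingleton fun ⟨i, β⟩ => ?_⟩
  simp [σ, hτx]

end HeisPair

theorem Module.Basis.span_singleton_injective {ι R M : Type*} [Semiring R] [Nontrivial R]
    [AddCommMonoid M] [Module R M] (b : Module.Basis ι R M) :
    Function.Injective fun p => R ∙ b p :=
  b.linearIndependent.iSupIndep_span_singleton.injective fun p => by
    simpa using b.ne_zero p

abbrev fineGradingAut {ι R L : Type*} [Finite ι] [CommRing R] [Nontrivial R] [LieRing L]
    [LieAlgebra R L] (b : Module.Basis ι R L) : Subgroup (L ≃ₗ[R] L) :=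
  lieAutSubgroup R L ⊓ componentPermuting b.span_singleton_injective

section FineGrading

variable {ι R L : Type*} [Finite ι] [CommRing R] [Nontrivial R] [LieRing L] [LieAlgebra R L]
  (b : Module.Basis ι R L)

noncomputable def fineGradingPerm : fineGradingAut b →* Perm ι :=
  (componentPermHom _).comp (Subgroup.inclusion inf_le_right)

theorem map_span_singleton_eq_fineGradingPerm (f : fineGradingAut b) (p : ι) :
    (R ∙ b p).map ((f : L ≃ₗ[R] L) : L →ₗ[R] L) = R ∙ b (fineGradingPerm b f p) :=
  map_eq_componentPerm b.span_singleton_injective (Subgroup.inclusion inf_le_right f) p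

theorem fineGradingPerm_eq_one_iff (f : fineGradingAut b) :
    fineGradingPerm b f = 1 ↔
      ∀ p, (R ∙ b p).map ((f : L ≃ₗ[R] L) : L →ₗ[R] L) = R ∙ b p :=
  componentPermHom_eq_one_iff _ _

end FineGrading

section HeisenbergBasis

variable {R L : Type*} [CommRing R] [LieRing L] [LieAlgebra R L] {k : ℕ}

structure IsHeisenbergBasis (b : Module.Basis ((Fin k × Bool) ⊕ Unit) R L) : Prop where
  lie_inl_inl : ∀ i, ⁅b (.inl (i, false)), b (.inl (i, true))⁆ = b (.inr ())
  lie_eq_zero : ∀ p q, ¬ HeisPair p q → ⁅b p, b q⁆ = 0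

variable {b : Module.Basis ((Fin k × Bool) ⊕ Unit) R L}

theorem IsHeisenbergBasis.lie_ne_zero_iff [Nontrivial R] (hb : IsHeisenbergBasis b)
    {p q : (Fin k × Bool) ⊕ Unit} : ⁅b p, b q⁆ ≠ 0 ↔ HeisPair p q := by
  refine ⟨fun h => by_contra (h <| hb.lie_eq_zero p q ·), fun h => ?_⟩
  obtain ⟨i, ⟨rfl, rfl⟩ | ⟨rfl, rfl⟩⟩ := h
  · rw [hb.lie_inl_inl]
    exact b.ne_zero _
  · rw [← lie_skew, hb.lie_inl_inl, neg_ne_zero]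
    exact b.ne_zero _

theorem IsHeisenbergBasis.heisPair_fineGradingPerm [Nontrivial R] (hb : IsHeisenbergBasis b)
    (f : fineGradingAut b) {p q : (Fin k × Bool) ⊕ Unit} (h : HeisPair p q) :
    HeisPair (fineGradingPerm b f p) (fineGradingPerm b f q) := by
  have hmem (p) : (f : L ≃ₗ[R] L) (b p) ∈ R ∙ b (fineGradingPerm b f p) := by
    rw [← map_span_singleton_eq_fineGradingPerm]
    exact Submodule.mem_map_of_mem (Submodule.mem_span_singleton_self _)
  obtain ⟨c, hc⟩ := Submodule.mem_span_singleton.mp (hmem p)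
  obtain ⟨d, hd⟩ := Submodule.mem_span_singleton.mp (hmem q)
  rw [← hb.lie_ne_zero_iff] at h ⊢
  intro h0
  refine h ((f : L ≃ₗ[R] L).injective ?_)
  rw [map_zero, f.2.1, ← hc, ← hd, smul_lie, lie_smul, h0, smul_zero, smul_zero]

end HeisenbergBasis

section SignedBasisEquiv

variable {R L : Type*} [CommRing R] [LieRing L] [LieAlgebra R L] {k : ℕ}
  (b : Module.Basis ((Fin k × Bool) ⊕ Unit) R L) (g : Hyperoctahedral k)

-- `e_i ↦ ê_{σ i}` forces `ê_i ↦ -e_{σ i}` for `⁅e_i, ê_i⁆ = z` to be preserved.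
def pairSign : (Fin k × Bool) ⊕ Unit → Rˣ :=
  Sum.elim (fun x => if x.2 = false ∧ g.left x.1 ≠ 1 then -1 else 1) 1

noncomputable def signedBasisEquiv : L ≃ₗ[R] L :=
  b.equiv (b.unitsSMul (pairSign g)) (signedPerm k g)

theorem signedBasisEquiv_apply (p : (Fin k × Bool) ⊕ Unit) :
    signedBasisEquiv b g (b p) =
      pairSign (R := R) g (signedPerm k g p) • b (signedPerm k g p) := by
  rw [signedBasisEquiv, Module.Basis.equiv_apply, Module.Basis.unitsSMul_apply]

theorem map_span_singleton_signedBasisEquiv (p : (Fin k × Bool) ⊕ Unit) :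
    (R ∙ b p).map (signedBasisEquiv b g : L →ₗ[R] L) = R ∙ b (signedPerm k g p) := by
  rw [Submodule.map_span, Set.image_singleton, LinearEquiv.coe_coe, signedBasisEquiv_apply,
    Submodule.span_singleton_group_smul_eq]

variable {b}

theorem IsHeisenbergBasis.signedBasisEquiv_lie (hb : IsHeisenbergBasis b) (i : Fin k) :
    signedBasisEquiv b g ⁅b (.inl (i, false)), b (.inl (i, true))⁆ =
      ⁅signedBasisEquiv b g (b (.inl (i, false))),
        signedBasisEquiv b g (b (.inl (i, true)))⁆ := by
  rw [hb.lie_inl_inl, signedBasisEquiv_apply, signedBasisEquiv_apply, signedBasisEquiv_apply]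
  by_cases hn : g.left (g.right i) = 1
  · simp [pairSign, hn, hb.lie_inl_inl]
  · simp [pairSign, hn, boolFlip_apply_of_ne_one hn, hb.lie_inl_inl]

theorem IsHeisenbergBasis.signedBasisEquiv_mem_lieAutSubgroup (hb : IsHeisenbergBasis b) :
    signedBasisEquiv b g ∈ lieAutSubgroup R L := by
  refine b.map_lie_of_map_lie_basis _ fun p q => ?_
  by_cases h : HeisPair p q
  · obtain ⟨i, β, rfl, rfl⟩ := heisPair_iff.mp h
    cases β
    · exact hb.signedBasisEquiv_lie g i
    · rw [Bool.not_true, ← lie_skew, LinearEquiv.coe_coe, map_neg, hb.signedBasisEquiv_lie,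
        lie_skew]
  · rw [hb.lie_eq_zero p q h, map_zero, LinearEquiv.coe_coe, signedBasisEquiv_apply,
      signedBasisEquiv_apply, Units.smul_def, Units.smul_def, smul_lie, lie_smul,
      hb.lie_eq_zero _ _ ((heisPair_signedPerm_iff g).not.mpr h), smul_zero, smul_zero]

end SignedBasisEquiv

section WeylGroup

variable {R L : Type*} [CommRing R] [Nontrivial R] [LieRing L] [LieAlgebra R L] {k : ℕ}
  {b : Module.Basis ((Fin k × Bool) ⊕ Unit) R L}

theorem IsHeisenbergBasis.signedBasisEquiv_mem_fineGradingAut (hb : IsHeisenbergBasis b)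
    (g : Hyperoctahedral k) : signedBasisEquiv b g ∈ fineGradingAut b :=
  ⟨hb.signedBasisEquiv_mem_lieAutSubgroup g,
    fun p => ⟨_, map_span_singleton_signedBasisEquiv b g p⟩⟩

noncomputable def IsHeisenbergBasis.weylHom (hb : IsHeisenbergBasis b) :
    fineGradingAut b →* Hyperoctahedral k :=
  (MonoidHom.ofInjective signedPerm_injective).symm.toMonoidHom.comp <|
    (fineGradingPerm b).codRestrict _ fun f =>
      mem_range_signedPerm fun _ _ => hb.heisPair_fineGradingPerm f

theorem IsHeisenbergBasis.signedPerm_weylHom (hb : IsHeisenbergBasis b) (f : fineGradingAut b) :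
    signedPerm k (hb.weylHom f) = fineGradingPerm b f :=
  congrArg Subtype.val ((MonoidHom.ofInjective signedPerm_injective).apply_symm_apply
    ⟨fineGradingPerm b f, _⟩)

theorem IsHeisenbergBasis.weylHom_surjective (hb : IsHeisenbergBasis b) :
    Surjective hb.weylHom := fun g => by
  refine ⟨⟨_, hb.signedBasisEquiv_mem_fineGradingAut g⟩, signedPerm_injective ?_⟩
  refine Equiv.ext fun p => b.span_singleton_injective ?_
  dsimp only
  rw [hb.signedPerm_weylHom, ← map_span_singleton_eq_fineGradingPerm]
  exact map_span_singleton_signedBasisEquiv b g p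

theorem IsHeisenbergBasis.weylHom_eq_one_iff (hb : IsHeisenbergBasis b) (f : fineGradingAut b) :
    hb.weylHom f = 1 ↔ ∀ p, (R ∙ b p).map ((f : L ≃ₗ[R] L) : L →ₗ[R] L) = R ∙ b p := by
  rw [← fineGradingPerm_eq_one_iff, ← hb.signedPerm_weylHom,
    map_eq_one_iff _ signedPerm_injective]

end WeylGroup

theorem heisenberg_fine_grading_weyl_group_general
    (F : Type*) [Field F]
    (L : Type*) [LieRing L] [LieAlgebra F L] (k : ℕ)
    (b : Module.Basis ((Fin k × Bool) ⊕ Unit) F L)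
    (hbr : ∀ i : Fin k, ⁅b (Sum.inl (i, false)), b (Sum.inl (i, true))⁆ = b (Sum.inr ()))
    (hz : ∀ p q : (Fin k × Bool) ⊕ Unit, ¬ HeisPair p q → ⁅b p, b q⁆ = 0)
    -- the homogeneous components of the fine grading Γ
    (C : ((Fin k × Bool) ⊕ Unit) → Submodule F L) (hC : ∀ p, C p = F ∙ b p) :
    ∃ AutΓ : Subgroup (L ≃ₗ[F] L),
      (↑AutΓ = {f : L ≃ₗ[F] L | (∀ x y : L, f ⁅x, y⁆ = ⁅f x, f y⁆) ∧
        ∀ p, ∃ q, (C p).map (f : L →ₗ[F] L) = C q}) ∧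
      ∃ φ : Equiv.Perm (Fin k) →* MulAut (Fin k → Multiplicative (ZMod 2)),
        (∀ (σ : Equiv.Perm (Fin k)) (x : Fin k → Multiplicative (ZMod 2)) (i : Fin k),
          φ σ x i = x (σ⁻¹ i)) ∧
        ∃ θ : AutΓ →* SemidirectProduct (Fin k → Multiplicative (ZMod 2))
            (Equiv.Perm (Fin k)) φ,
          Function.Surjective θ ∧
          ∀ f : AutΓ, θ f = 1 ↔ ∀ p, (C p).map ((f : L ≃ₗ[F] L) : L →ₗ[F] L) = C p := by
  obtain rfl : C = fun p => F ∙ b p := funext hC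
  have hb : IsHeisenbergBasis b := ⟨hbr, hz⟩
  exact ⟨fineGradingAut b, rfl, permArrowMulAut _ _, permArrowMulAut_apply, hb.weylHom,
    hb.weylHom_surjective, hb.weylHom_eq_one_iff⟩

/-- The Weyl group of the fine `ℤ^{k+1}`-grading of the Heisenberg algebra
`H_n` (each standard basis vector spans a homogeneous component) is
`ℤ_2^k ⋊ S_k`: there is a group homomorphism from the group `Aut(Γ)` of
automorphisms permuting the homogeneous components onto the semidirect product
(with `S_k` permuting the factors of `ℤ_2^k`) whose kernel is exactly the
stabilizer `Stab(Γ)`. -/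
theorem heisenberg_fine_grading_weyl_group
    (F : Type*) [Field F] [IsAlgClosed F] [CharZero F]
    (L : Type*) [LieRing L] [LieAlgebra F L] (k : ℕ)
    (b : Module.Basis ((Fin k × Bool) ⊕ Unit) F L)
    (hbr : ∀ i : Fin k, ⁅b (Sum.inl (i, false)), b (Sum.inl (i, true))⁆ = b (Sum.inr ()))
    (hz : ∀ p q : (Fin k × Bool) ⊕ Unit, ¬ HeisPair p q → ⁅b p, b q⁆ = 0)
    -- the homogeneous components of the fine grading Γ
    (C : ((Fin k × Bool) ⊕ Unit) → Submodule F L) (hC : ∀ p, C p = F ∙ b p) :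
    ∃ AutΓ : Subgroup (L ≃ₗ[F] L),
      (↑AutΓ = {f : L ≃ₗ[F] L | (∀ x y : L, f ⁅x, y⁆ = ⁅f x, f y⁆) ∧
        ∀ p, ∃ q, (C p).map (f : L →ₗ[F] L) = C q}) ∧
      ∃ φ : Equiv.Perm (Fin k) →* MulAut (Fin k → Multiplicative (ZMod 2)),
        (∀ (σ : Equiv.Perm (Fin k)) (x : Fin k → Multiplicative (ZMod 2)) (i : Fin k),
          φ σ x i = x (σ⁻¹ i)) ∧
        ∃ θ : AutΓ →* SemidirectProduct (Fin k → Multiplicative (ZMod 2))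
            (Equiv.Perm (Fin k)) φ,
          Function.Surjective θ ∧
          ∀ f : AutΓ, θ f = 1 ↔ ∀ p, (C p).map ((f : L ≃ₗ[F] L) : L →ₗ[F] L) = C p :=
  heisenberg_fine_grading_weyl_group_general F L k b hbr hz C hC
end

section
/- Let H_{n,m} be the Heisenberg superalgebra over an algebraically closed field of characteristic ≠ 2, with even part of dimension n = 2k+1 and odd part of dimension m. If H_{n,m} is graded by an abelian group G (as a superalgebra), then there is a homogeneous basis {z, e_1, ê_1, …, e_k, ê_k, u_1, v_1, …, u_r, v_r, z_1, …, z_q} (with 2r + q = m) such that the only nonzero brackets are [e_i,ê_i] = [u_j,v_j] = [z_l,z_l] = z. -/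
/-!
Write `[x, y] = φ x y • z`. The bilinear form `φ` is alternating on the even part, symmetric on
the odd part, makes the two parts orthogonal, and has radical `F z`. Since the bracket is graded and
`z ≠ 0`, the `φ`-orthogonal of a homogeneous vector is a graded subspace; hence so is the radical,
and `z` is homogeneous. Projecting to homogeneous components, any graded subspace `V` on which `φ`
is nonzero contains homogeneous `u, v` with `φ u v ≠ 0`. If `V` contains a homogeneous anisotropic
vector, it is normalised (here `F` is algebraically closed) and split off; otherwise `u, v` are
isotropic and span a hyperbolic pair that is split off. The orthogonal of what was split off is
again graded, so induction on `V` produces the basis.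
-/

/-- Index type for a homogeneous basis of a Heisenberg superalgebra:
even part `{e_i, ê_i, z}`, odd part `{u_j, v_j, z_l}`. -/
abbrev SupIdx (k r q : ℕ) := ((Fin k × Bool) ⊕ Unit) ⊕ ((Fin r × Bool) ⊕ Fin q)

/-- Pairs of indices with possibly nonzero bracket: `(e_i, ê_i)`, `(ê_i, e_i)`,
`(u_j, v_j)`, `(v_j, u_j)` and `(z_l, z_l)`. -/
def SupPair {k r q : ℕ} (p p' : SupIdx k r q) : Prop :=
  (∃ i : Fin k, ∃ s : Bool,
    p = Sum.inl (Sum.inl (i, s)) ∧ p' = Sum.inl (Sum.inl (i, !s))) ∨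
  (∃ j : Fin r, ∃ s : Bool,
    p = Sum.inr (Sum.inl (j, s)) ∧ p' = Sum.inr (Sum.inl (j, !s))) ∨
  (∃ l : Fin q, p = Sum.inr (Sum.inr l) ∧ p' = Sum.inr (Sum.inr l))

open Module Submodule DirectSum

section Grading

variable {F L G : Type*} [Field F] [AddCommGroup L] [Module F L] [DecidableEq G]
  (Cg : G → Submodule F L) [Decomposition Cg]

theorem decompose_map_of_mapsTo_add [Add G] [IsRightCancelAdd G] {f : L →ₗ[F] L} {h : G}
    (hf : ∀ g, ∀ x ∈ Cg g, f x ∈ Cg (g + h)) (x : L) (g : G) :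
    (decompose Cg (f x) (g + h) : L) = f (decompose Cg x g) := by
  induction x using Decomposition.inductionOn Cg with
  | zero => simp
  | @homogeneous g' y =>
    by_cases hg : g' = g
    · subst hg
      rw [decompose_of_mem_same Cg (hf _ _ y.2), decompose_of_mem_same Cg y.2]
    · rw [decompose_of_mem_ne Cg (hf _ _ y.2) (by simpa using hg),
        decompose_of_mem_ne Cg y.2 hg, map_zero]
  | add x y hx hy => simp [hx, hy]

theorem isHomogeneous_ker_of_mapsTo_add [Add G] [IsRightCancelAdd G] {f : L →ₗ[F] L} {h : G}
    (hf : ∀ g, ∀ x ∈ Cg g, f x ∈ Cg (g + h)) : SetLike.IsHomogeneous Cg (LinearMap.ker f) := by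
  intro g x hx
  rw [LinearMap.mem_ker] at hx ⊢
  rw [← decompose_map_of_mapsTo_add Cg hf, hx, decompose_zero]; rfl

variable {Cg} in
theorem SetLike.IsHomogeneous.inf {V W : Submodule F L} (hV : SetLike.IsHomogeneous Cg V)
    (hW : SetLike.IsHomogeneous Cg W) : SetLike.IsHomogeneous Cg (V ⊓ W) :=
  fun g _ hx => ⟨hV g hx.1, hW g hx.2⟩

variable {Cg} in
theorem SetLike.IsHomogeneous.iInf {κ : Type*} {V : κ → Submodule F L}
    (hV : ∀ j, SetLike.IsHomogeneous Cg (V j)) : SetLike.IsHomogeneous Cg (⨅ j, V j) :=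
  fun g _ hx => mem_iInf _ |>.2 fun j => hV j g (mem_iInf _ |>.1 hx j)

theorem isHomogeneous_of_isCompl [AddMonoid G] [IsRightCancelAdd G] {E E' : Submodule F L}
    (hEE' : IsCompl E E') (hC : ∀ g, Cg g ≤ Cg g ⊓ E ⊔ Cg g ⊓ E') :
    SetLike.IsHomogeneous Cg E := by
  rw [← ker_projection hEE'.symm]
  refine isHomogeneous_ker_of_mapsTo_add Cg (h := 0) fun g x hx => ?_
  obtain ⟨a, ha, b, hb, rfl⟩ := mem_sup.1 (hC g hx)
  rw [add_zero, map_add, projection_apply_of_mem_right _ ha.2,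
    projection_apply_of_mem_left _ hb.2, zero_add]
  exact hb.1

theorem exists_apply_decompose_ne_zero {M : Type*} [AddCommGroup M] [Module F M]
    (ℓ : L →ₗ[F] M) {x : L} (hx : ℓ x ≠ 0) : ∃ g, ℓ (decompose Cg x g) ≠ 0 := by
  classical
  by_contra! h
  exact hx (by rw [← sum_support_decompose Cg x, map_sum]; exact Finset.sum_eq_zero fun g _ => h g)

theorem isHomogeneousElem_of_isHomogeneous_span_singleton {z : L} (hz : z ≠ 0)
    (h : SetLike.IsHomogeneous Cg (F ∙ z)) : SetLike.IsHomogeneousElem Cg z := by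
  obtain ⟨g, hg⟩ := exists_apply_decompose_ne_zero Cg LinearMap.id hz
  obtain ⟨c, hc⟩ := mem_span_singleton.1 (h g (mem_span_singleton_self z))
  have hc0 : c ≠ 0 := by
    rintro rfl
    exact hg (by simpa using hc.symm)
  refine ⟨g, ?_⟩
  rw [← inv_smul_smul₀ hc0 z, hc]
  exact smul_mem _ _ (SetLike.coe_mem _)

end Grading

section Form

variable {F L : Type*} [Field F] [AddCommGroup L] [Module F L] (φ : L →ₗ[F] L →ₗ[F] F)

theorem apply_eq_zero_of_mem_span {M : Type*} [AddCommGroup M] [Module F M]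
    (B : L →ₗ[F] L →ₗ[F] M) {S T : Set L} (h : ∀ s ∈ S, ∀ t ∈ T, B s t = 0) {x y : L}
    (hx : x ∈ span F S) (hy : y ∈ span F T) : B x y = 0 := by
  have hT : ∀ s ∈ S, span F T ≤ LinearMap.ker (B s) :=
    fun s hs => span_le.2 fun t ht => h s hs t ht
  exact (span_le (p := LinearMap.ker (B.flip y))).2 (fun s hs => hT s hs hy) hx

theorem apply_self_eq_zero_of_mem_span {S : Set L}
    (hanti : ∀ x ∈ span F S, ∀ y ∈ span F S, φ y x = -φ x y) (hS : ∀ s ∈ S, φ s s = 0)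
    {x : L} (hx : x ∈ span F S) : φ x x = 0 := by
  induction hx using span_induction with
  | mem s hs => exact hS s hs
  | zero => simp
  | add x y hx hy ihx ihy => simp [ihx, ihy, hanti x hx y hy]
  | smul c x hx ih => simp [ih]

theorem coeff_eq_zero_of_dual {ι : Type*} [Fintype ι] [DecidableEq ι] {c : ι → L} {j : ι}
    {t : L} {d : F} (hd : d ≠ 0) (ht : ∀ i, φ (c i) t = if i = j then d else 0) {a : ι → F}
    (ha : φ (∑ i, a i • c i) t = 0) : a j = 0 := by
  rw [map_sum, LinearMap.sum_apply] at ha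
  simp only [map_smul, LinearMap.smul_apply, ht, smul_eq_mul, mul_ite, mul_zero,
    Finset.sum_ite_eq', Finset.mem_univ, if_true] at ha
  exact (mul_eq_zero.1 ha).resolve_right hd

theorem linearIndependent_of_dual {ι : Type*} [Fintype ι] [DecidableEq ι] {c : ι → L} {i₀ : ι}
    (h₀ : c i₀ ≠ 0)
    (hdual : ∀ j ≠ i₀, ∃ t d, d ≠ 0 ∧ ∀ i, φ (c i) t = if i = j then d else 0) :
    LinearIndependent F c := by
  rw [Fintype.linearIndependent_iff]
  intro a ha
  have hne : ∀ j ≠ i₀, a j = 0 := fun j hj => by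
    obtain ⟨t, d, hd, ht⟩ := hdual j hj
    exact coeff_eq_zero_of_dual φ hd ht (by rw [ha, map_zero, LinearMap.zero_apply])
  rw [Finset.sum_eq_single i₀ (fun j _ hj => by rw [hne j hj, zero_smul]) (by simp)] at ha
  intro j
  by_cases hj : j = i₀
  · exact hj ▸ (smul_eq_zero.1 ha).resolve_right h₀
  · exact hne j hj

theorem ker_le_span_singleton_of_dual {ι : Type*} [Fintype ι] [DecidableEq ι] (b : Basis ι F L)
    {i₀ : ι} (hdual : ∀ j ≠ i₀, ∃ t d, d ≠ 0 ∧ ∀ i, φ (b i) t = if i = j then d else 0) :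
    LinearMap.ker φ ≤ F ∙ b i₀ := by
  intro x hx
  have hne : ∀ j ≠ i₀, b.repr x j = 0 := fun j hj => by
    obtain ⟨t, d, hd, ht⟩ := hdual j hj
    exact coeff_eq_zero_of_dual φ hd ht (by rw [b.sum_repr x, LinearMap.mem_ker.1 hx]; rfl)
  rw [← b.sum_repr x, Finset.sum_eq_single i₀ (fun j _ hj => by rw [hne j hj, zero_smul])
    (by simp)]
  exact smul_mem _ _ (mem_span_singleton_self _)

theorem le_span_sup_inf_iInf_ker {V : Submodule F L} {κ : Type*} [Fintype κ] [DecidableEq κ]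
    {w w' : κ → L} (hw' : ∀ i, w' i ∈ V)
    (hdual : ∀ i j, φ (w' i) (w j) = if i = j then 1 else 0) :
    V ≤ span F (Set.range w') ⊔ V ⊓ ⨅ j, LinearMap.ker (φ.flip (w j)) := by
  intro x hx
  have hproj : ∑ i, φ x (w i) • w' i ∈ span F (Set.range w') :=
    sum_mem fun i _ => smul_mem _ _ (subset_span ⟨i, rfl⟩)
  refine mem_sup.2 ⟨_, hproj, x - ∑ i, φ x (w i) • w' i,
    ⟨sub_mem hx (sum_mem fun i _ => smul_mem _ _ (hw' i)), mem_iInf _ |>.2 fun j => ?_⟩,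
    add_sub_cancel _ _⟩
  simp [hdual]

theorem eq_compr₂_coord_smul {ι : Type*} (b : Basis ι F L) (i₀ : ι) {br : L →ₗ[F] L →ₗ[F] L}
    {M : ι → ι → F} (h : ∀ i j, br (b i) (b j) = M i j • b i₀) (x y : L) :
    br x y = br.compr₂ (b.coord i₀) x y • b i₀ := by
  have hbr : br = (br.compr₂ (b.coord i₀)).compr₂ (LinearMap.toSpanSingleton F L (b i₀)) :=
    LinearMap.ext_basis b b fun i j => by simp [h]
  exact congr($hbr x y)

end Form

section Complement

variable {F L : Type*} [Field F] [AddCommGroup L] [Module F L] {E E' : Submodule F L}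

theorem span_eq_of_isCompl (h : IsCompl E E') {S S' : Set L} (hS : S ⊆ E) (hS' : S' ⊆ E')
    (htop : span F (S ∪ S') = ⊤) : span F S = E := by
  refine eq_of_le_of_inf_le_of_sup_le (span_le.2 hS) (by rw [h.inf_eq_bot]; exact bot_le) ?_
  rw [h.sup_eq_top, ← htop, span_union]
  exact sup_le_sup_left (span_le.2 hS') _

theorem span_range_comp_inl_inr_eq {ι κ : Type*} (b : Basis (ι ⊕ κ) F L) (h : IsCompl E E')
    (hE : ∀ i, b (.inl i) ∈ E) (hE' : ∀ j, b (.inr j) ∈ E') :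
    span F (Set.range (b ∘ .inl)) = E ∧ span F (Set.range (b ∘ .inr)) = E' := by
  have htop : span F (Set.range (b ∘ .inl) ∪ Set.range (b ∘ .inr)) = ⊤ := by
    rw [← Sum.range_eq, b.span_eq]
  exact ⟨span_eq_of_isCompl h (Set.range_subset_iff.2 hE) (Set.range_subset_iff.2 hE') htop,
    span_eq_of_isCompl h.symm (Set.range_subset_iff.2 hE') (Set.range_subset_iff.2 hE)
      (by rwa [Set.union_comm])⟩

theorem finrank_eq_card_of_isCompl {ι κ : Type*} [Fintype ι] (b : Basis (ι ⊕ κ) F L)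
    (h : IsCompl E E') (hE : ∀ i, b (.inl i) ∈ E) (hE' : ∀ j, b (.inr j) ∈ E') :
    finrank F E = Fintype.card ι := by
  rw [← (span_range_comp_inl_inr_eq b h hE hE').1,
    finrank_span_eq_card (b.linearIndependent.comp _ Sum.inl_injective)]

theorem mem_ker_of_isCompl (φ : L →ₗ[F] L →ₗ[F] F) (h : IsCompl E E') {x : L}
    (hE : ∀ y ∈ E, φ x y = 0) (hE' : ∀ y ∈ E', φ x y = 0) : x ∈ LinearMap.ker φ := by
  refine LinearMap.mem_ker.2 (LinearMap.ext fun y => ?_)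
  obtain ⟨a, ha, b, hb, rfl⟩ := mem_sup.1 (h.sup_eq_top ▸ mem_top : y ∈ E ⊔ E')
  rw [map_add, hE a ha, hE' b hb, add_zero, LinearMap.zero_apply]

end Complement

section GradedForm

variable {F L G : Type*} [Field F] [AddCommGroup L] [Module F L] [DecidableEq G]
  {Cg : G → Submodule F L} [Decomposition Cg] {φ : L →ₗ[F] L →ₗ[F] F}

theorem isHomogeneous_ker_flip_of_eq_smul [Add G] [IsRightCancelAdd G] {br : L →ₗ[F] L →ₗ[F] L}
    {z : L} (hgr : ∀ (g h : G) (x y : L), x ∈ Cg g → y ∈ Cg h → br x y ∈ Cg (g + h))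
    (hbr : ∀ x y, br x y = φ x y • z) (hz : z ≠ 0) (w : L)
    (hw : SetLike.IsHomogeneousElem Cg w) :
    SetLike.IsHomogeneous Cg (LinearMap.ker (φ.flip w)) := by
  obtain ⟨h, hw⟩ := hw
  have hker : LinearMap.ker (φ.flip w) = LinearMap.ker (br.flip w) := by
    ext x
    simp [hbr, hz]
  rw [hker]
  exact isHomogeneous_ker_of_mapsTo_add Cg fun g x hx => hgr g h x w hx hw

theorem isHomogeneous_ker
    (hφ : ∀ w, SetLike.IsHomogeneousElem Cg w →
      SetLike.IsHomogeneous Cg (LinearMap.ker (φ.flip w))) :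
    SetLike.IsHomogeneous Cg (LinearMap.ker φ) := by
  intro g x hx
  refine LinearMap.mem_ker.2 (LinearMap.ext fun y => ?_)
  induction y using Decomposition.inductionOn Cg with
  | zero => simp
  | @homogeneous h y =>
    exact hφ y ⟨h, y.2⟩ g (by simp [LinearMap.mem_ker.1 hx])
  | add y y' hy hy' => simp_all

end GradedForm

-- Gram matrix of pairs `u_j, v_j` indexed by `(j, false), (j, true)`, with `φ u_j v_j = 1` and
-- `φ v_j u_j = ε`, and of vectors `z_l` indexed by `l`, with `φ z_l z_l = 1`.
def blockGram {R : Type*} [Zero R] [One R] {r q : ℕ} (ε : R) :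
    (Fin r × Bool) ⊕ Fin q → (Fin r × Bool) ⊕ Fin q → R
  | .inl (j, s), .inl (j', t) => if j = j' ∧ t = !s then (if s then ε else 1) else 0
  | .inr l, .inr l' => if l = l' then 1 else 0
  | _, _ => 0

def pairCons {X : Type*} {r q : ℕ} (a : Bool → X) (w : (Fin r × Bool) ⊕ Fin q → X) :
    (Fin (r + 1) × Bool) ⊕ Fin q → X
  | .inl (j, s) => (Fin.cons (a s) (fun j => w (.inl (j, s))) : Fin (r + 1) → X) j
  | .inr l => w (.inr l)

def singleCons {X : Type*} {r q : ℕ} (a : X) (w : (Fin r × Bool) ⊕ Fin q → X) :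
    (Fin r × Bool) ⊕ Fin (q + 1) → X
  | .inl p => w (.inl p)
  | .inr l => (Fin.cons a (fun l => w (.inr l)) : Fin (q + 1) → X) l

section StandardFamily

variable {F L G : Type*} [Field F] [AddCommGroup L] [Module F L]
  (φ : L →ₗ[F] L →ₗ[F] F) (Cg : G → Submodule F L) (ε : F)

structure IsGradedSymm [DecidableEq G] [Decomposition Cg] (R V : Submodule F L) : Prop where
  homogeneous : SetLike.IsHomogeneous Cg V
  symm : ∀ x ∈ V, ∀ y ∈ V, φ y x = ε * φ x y
  radical_le : ∀ x ∈ V, (∀ y ∈ V, φ x y = 0) → x ∈ R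

def HasStandardFamily (R V : Submodule F L) : Prop :=
  ∃ (r q : ℕ) (w : (Fin r × Bool) ⊕ Fin q → L),
    (∀ p, w p ∈ V ∧ SetLike.IsHomogeneousElem Cg (w p)) ∧
    (∀ p p', φ (w p) (w p') = blockGram ε p p') ∧ V ≤ R ⊔ span F (Set.range w)

variable {φ Cg ε} {R V W : Submodule F L}

theorem HasStandardFamily.of_le (h : V ≤ R) : HasStandardFamily φ Cg ε R V :=
  ⟨0, 0, isEmptyElim, isEmptyElim, isEmptyElim, le_sup_of_le_left h⟩

theorem HasStandardFamily.pair (hW : HasStandardFamily φ Cg ε R W) (hWV : W ≤ V) {a : Bool → L}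
    (ha : ∀ s, a s ∈ V ∧ SetLike.IsHomogeneousElem Cg (a s))
    (haa : ∀ s t, φ (a s) (a t) = if t = !s then (if s then ε else 1) else 0)
    (horth : ∀ x ∈ W, ∀ s, φ x (a s) = 0 ∧ φ (a s) x = 0)
    (hspan : V ≤ span F (Set.range a) ⊔ W) : HasStandardFamily φ Cg ε R V := by
  obtain ⟨r, q, w, hw, hgram, hWspan⟩ := hW
  have hwa : ∀ p s, φ (w p) (a s) = 0 ∧ φ (a s) (w p) = 0 := fun p s => horth _ (hw p).1 s
  refine ⟨r + 1, q, pairCons a w, ?_, ?_, ?_⟩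
  · rintro (⟨j, s⟩ | l)
    · cases j using Fin.cases with
      | zero => simpa [pairCons] using ha s
      | succ j => simpa [pairCons] using And.imp_left (@hWV _) (hw _)
    · simpa [pairCons] using And.imp_left (@hWV _) (hw _)
  · rintro (⟨j, s⟩ | l) (⟨j', t⟩ | l') <;>
      (try cases j using Fin.cases) <;> (try cases j' using Fin.cases) <;>
      simp [pairCons, blockGram, haa, hgram, hwa, eq_comm (a := (0 : Fin _))]
  · have hw' : Set.range w ⊆ Set.range (pairCons a w) := by
      rintro _ ⟨⟨j, s⟩ | l, rfl⟩
      exacts [⟨.inl (j.succ, s), by simp [pairCons]⟩, ⟨.inr l, rfl⟩]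
    have ha' : Set.range a ⊆ Set.range (pairCons a w) := by
      rintro _ ⟨s, rfl⟩
      exact ⟨.inl (0, s), by simp [pairCons]⟩
    refine hspan.trans (sup_le (le_sup_of_le_right (span_mono ha')) (hWspan.trans ?_))
    exact sup_le_sup_left (span_mono hw') _

theorem HasStandardFamily.single (hW : HasStandardFamily φ Cg ε R W) (hWV : W ≤ V) {a : L}
    (ha : a ∈ V) (ha' : SetLike.IsHomogeneousElem Cg a) (haa : φ a a = 1)
    (horth : ∀ x ∈ W, φ x a = 0 ∧ φ a x = 0) (hspan : V ≤ span F {a} ⊔ W) :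
    HasStandardFamily φ Cg ε R V := by
  obtain ⟨r, q, w, hw, hgram, hWspan⟩ := hW
  have hwa : ∀ p, φ (w p) a = 0 ∧ φ a (w p) = 0 := fun p => horth _ (hw p).1
  refine ⟨r, q + 1, singleCons a w, ?_, ?_, ?_⟩
  · rintro (p | l)
    · simpa [singleCons] using And.imp_left (@hWV _) (hw _)
    · cases l using Fin.cases with
      | zero => simpa [singleCons] using ⟨ha, ha'⟩
      | succ l => simpa [singleCons] using And.imp_left (@hWV _) (hw _)
  · rintro (p | l) (p' | l') <;>
      (try cases l using Fin.cases) <;> (try cases l' using Fin.cases) <;>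
      simp [singleCons, blockGram, haa, hgram, hwa, eq_comm (a := (0 : Fin _))]
  · have hw' : Set.range w ⊆ Set.range (singleCons a w) := by
      rintro _ ⟨p | l, rfl⟩
      exacts [⟨.inl p, rfl⟩, ⟨.inr l.succ, by simp [singleCons]⟩]
    have ha' : a ∈ Set.range (singleCons a w) := ⟨.inr 0, by simp [singleCons]⟩
    refine hspan.trans (sup_le (le_sup_of_le_right (span_le.2 ?_)) (hWspan.trans ?_))
    · exact Set.singleton_subset_iff.2 (subset_span ha')
    · exact sup_le_sup_left (span_mono hw') _

variable [DecidableEq G] [Decomposition Cg]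

theorem exists_homogeneous_apply_ne_zero (hV : SetLike.IsHomogeneous Cg V) {x y : L} (hx : x ∈ V)
    (hy : y ∈ V) (hxy : φ x y ≠ 0) :
    ∃ u ∈ V, SetLike.IsHomogeneousElem Cg u ∧
      ∃ v ∈ V, SetLike.IsHomogeneousElem Cg v ∧ φ u v ≠ 0 := by
  obtain ⟨g, hg⟩ := exists_apply_decompose_ne_zero Cg (φ.flip y) hxy
  obtain ⟨h, hh⟩ := exists_apply_decompose_ne_zero Cg (φ (decompose Cg x g)) hg
  exact ⟨_, hV g hx, ⟨g, SetLike.coe_mem _⟩, _, hV h hy, ⟨h, SetLike.coe_mem _⟩, hh⟩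

theorem IsGradedSymm.exists_split
    (hφ : ∀ w, SetLike.IsHomogeneousElem Cg w →
      SetLike.IsHomogeneous Cg (LinearMap.ker (φ.flip w)))
    (hV : IsGradedSymm φ Cg ε R V) {κ : Type*} [Fintype κ] [DecidableEq κ] [Nonempty κ]
    {w w' : κ → L} (hw : ∀ j, w j ∈ V ∧ SetLike.IsHomogeneousElem Cg (w j))
    (hw' : ∀ i, w' i ∈ span F (Set.range w))
    (hdual : ∀ i j, φ (w' i) (w j) = if i = j then 1 else 0) :
    ∃ W < V, IsGradedSymm φ Cg ε R W ∧ (∀ x ∈ W, ∀ j, φ x (w j) = 0 ∧ φ (w j) x = 0) ∧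
      V ≤ span F (Set.range w) ⊔ W := by
  have hwV : span F (Set.range w) ≤ V := span_le.2 (Set.range_subset_iff.2 fun j => (hw j).1)
  set W := V ⊓ ⨅ j, LinearMap.ker (φ.flip (w j))
  have hWw : ∀ x ∈ W, ∀ j, φ x (w j) = 0 := fun x hx j => by
    simpa using (mem_iInf _).1 hx.2 j
  have hWspan : ∀ x ∈ W, ∀ y ∈ span F (Set.range w), φ x y = 0 := fun x hx _ hy =>
    (span_le (p := LinearMap.ker (φ x))).2 (Set.range_subset_iff.2 (hWw x hx)) hy
  have hspan : V ≤ span F (Set.range w) ⊔ W :=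
    (le_span_sup_inf_iInf_ker φ (fun i => hwV (hw' i)) hdual).trans
      (sup_le_sup_right (span_le.2 (Set.range_subset_iff.2 hw')) _)
  obtain ⟨i₀⟩ := ‹Nonempty κ›
  refine ⟨W, lt_of_le_of_ne inf_le_left fun h => ?_, ⟨?_, ?_, ?_⟩,
    fun x hx j => ⟨hWw x hx j, ?_⟩, hspan⟩
  · have h₀ := hWw (w' i₀) (by rw [h]; exact hwV (hw' i₀)) i₀
    simp [hdual] at h₀
  · exact SetLike.IsHomogeneous.inf hV.homogeneous
      (SetLike.IsHomogeneous.iInf fun j => hφ _ (hw j).2)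
  · exact fun x hx y hy => hV.symm x hx.1 y hy.1
  · intro x hx hxW
    refine hV.radical_le x hx.1 fun y hy => ?_
    obtain ⟨a, ha, b, hb, rfl⟩ := mem_sup.1 (hspan hy)
    rw [map_add, hWspan x hx a ha, hxW b hb, add_zero]
  · rw [hV.symm x hx.1 _ (hw j).1, hWw x hx j, mul_zero]

theorem IsGradedSymm.hasStandardFamily_of_anisotropic [IsAlgClosed F]
    (hφ : ∀ w, SetLike.IsHomogeneousElem Cg w →
      SetLike.IsHomogeneous Cg (LinearMap.ker (φ.flip w)))
    (hV : IsGradedSymm φ Cg ε R V)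
    (IH : ∀ W < V, IsGradedSymm φ Cg ε R W → HasStandardFamily φ Cg ε R W) {a : L}
    (haV : a ∈ V) (ha : SetLike.IsHomogeneousElem Cg a) (haa : φ a a ≠ 0) :
    HasStandardFamily φ Cg ε R V := by
  obtain ⟨g, hag⟩ := ha
  obtain ⟨s, hs⟩ := IsAlgClosed.exists_eq_mul_self (φ a a)
  have hs0 : s ≠ 0 := by
    rintro rfl
    exact haa (by simpa using hs)
  have hnorm : φ (s⁻¹ • a) (s⁻¹ • a) = 1 := by
    simp only [map_smul, LinearMap.smul_apply, smul_eq_mul, hs]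
    field_simp
  have ha' : s⁻¹ • a ∈ V ∧ SetLike.IsHomogeneousElem Cg (s⁻¹ • a) :=
    ⟨smul_mem _ _ haV, g, smul_mem _ _ hag⟩
  obtain ⟨W, hWV, hW, horth, hspan⟩ := hV.exists_split hφ (κ := Unit) (fun _ => ha')
    (w' := fun _ => s⁻¹ • a) (fun _ => subset_span ⟨(), rfl⟩)
    (fun _ _ => by rw [if_pos rfl]; exact hnorm)
  exact (IH W hWV hW).single hWV.le ha'.1 ha'.2 hnorm (fun x hx => horth x hx ())
    (by simpa using hspan)

theorem IsGradedSymm.hasStandardFamily_of_isotropic (hε : ε * ε = 1)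
    (hφ : ∀ w, SetLike.IsHomogeneousElem Cg w →
      SetLike.IsHomogeneous Cg (LinearMap.ker (φ.flip w)))
    (hV : IsGradedSymm φ Cg ε R V)
    (IH : ∀ W < V, IsGradedSymm φ Cg ε R W → HasStandardFamily φ Cg ε R W) {u v : L}
    (huV : u ∈ V) (hu : SetLike.IsHomogeneousElem Cg u) (huu : φ u u = 0)
    (hvV : v ∈ V) (hv : SetLike.IsHomogeneousElem Cg v) (hvv : φ v v = 0) (huv : φ u v ≠ 0) :
    HasStandardFamily φ Cg ε R V := by
  obtain ⟨g, hvg⟩ := hv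
  set v' := (φ u v)⁻¹ • v
  have hv'V : v' ∈ V := smul_mem _ _ hvV
  have huv' : φ u v' = 1 := by simp [v', huv]
  have hv'u : φ v' u = ε := by rw [hV.symm u huV v' hv'V, huv', mul_one]
  have hv'v' : φ v' v' = 0 := by simp [v', hvv]
  let a : Bool → L := fun s => bif s then v' else u
  have ha : ∀ s, a s ∈ V ∧ SetLike.IsHomogeneousElem Cg (a s) := by
    rintro (_ | _)
    exacts [⟨huV, hu⟩, ⟨hv'V, g, smul_mem _ _ hvg⟩]
  have haa : ∀ s t, φ (a s) (a t) = if t = !s then (if s then ε else 1) else 0 := by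
    rintro (_ | _) (_ | _) <;> simp [a, huu, hv'v', huv', hv'u]
  -- `(ε • v', u)` is the `φ`-dual of `(u, v')`
  obtain ⟨W, hWV, hW, horth, hspan⟩ := hV.exists_split hφ ha
    (w' := fun s => bif s then u else ε • v')
    (by
      rintro (_ | _)
      exacts [smul_mem _ _ (subset_span ⟨true, rfl⟩), subset_span ⟨false, rfl⟩])
    (by rintro (_ | _) (_ | _) <;> simp [a, huu, hv'v', huv', hv'u, hε])
  exact (IH W hWV hW).pair hWV.le ha haa horth hspan

theorem hasStandardFamily [FiniteDimensional F L] [IsAlgClosed F] (hε : ε * ε = 1)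
    (hφ : ∀ w, SetLike.IsHomogeneousElem Cg w →
      SetLike.IsHomogeneous Cg (LinearMap.ker (φ.flip w)))
    (hV : IsGradedSymm φ Cg ε R V) : HasStandardFamily φ Cg ε R V := by
  induction V using WellFoundedLT.induction with
  | _ V IH =>
  by_cases hVR : V ≤ R
  · exact .of_le hVR
  obtain ⟨x, hxV, hxR⟩ := SetLike.not_le_iff_exists.1 hVR
  obtain ⟨y, hyV, hxy⟩ : ∃ y ∈ V, φ x y ≠ 0 := by
    by_contra! h
    exact hxR (hV.radical_le x hxV h)
  by_cases hani : ∃ a ∈ V, SetLike.IsHomogeneousElem Cg a ∧ φ a a ≠ 0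
  · obtain ⟨a, haV, ha, haa⟩ := hani
    exact hV.hasStandardFamily_of_anisotropic hφ IH haV ha haa
  · push Not at hani
    obtain ⟨u, huV, hu, v, hvV, hv, huv⟩ :=
      exists_homogeneous_apply_ne_zero hV.homogeneous hxV hyV hxy
    exact hV.hasStandardFamily_of_isotropic hε hφ IH huV hu (hani u huV hu) hvV hv
      (hani v hvV hv) huv

end StandardFamily

def superGram {R : Type*} [Zero R] [One R] [Neg R] {k r q : ℕ} :
    SupIdx k r q → SupIdx k r q → R
  | .inl (.inl (i, s)), .inl (.inl (i', t)) => if i = i' ∧ t = !s then (if s then -1 else 1) else 0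
  | .inr p, .inr p' => blockGram 1 p p'
  | _, _ => 0

section SuperGram

variable {R : Type*} {k r q : ℕ}

section Signed

variable [Zero R] [One R] [Neg R]

theorem superGram_eq_zero_of_not_supPair {p p' : SupIdx k r q} (h : ¬SupPair p p') :
    superGram p p' = (0 : R) := by
  contrapose! h
  rcases p with ((⟨i, s⟩ | ⟨⟩) | (⟨j, s⟩ | l)) <;>
    rcases p' with ((⟨i', t⟩ | ⟨⟩) | (⟨j', t⟩ | l')) <;>
    simp only [superGram, blockGram, ne_eq, ite_eq_right_iff, not_forall, not_true_eq_false] at h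
  · obtain ⟨⟨rfl, rfl⟩, -⟩ := h
    exact Or.inl ⟨i, s, rfl, rfl⟩
  · obtain ⟨⟨rfl, rfl⟩, -⟩ := h
    exact Or.inr (Or.inl ⟨j, s, rfl, rfl⟩)
  · obtain ⟨rfl, -⟩ := h
    exact Or.inr (Or.inr ⟨l, rfl, rfl⟩)

theorem superGram_inl_self (p : (Fin k × Bool) ⊕ Unit) :
    superGram (.inl p : SupIdx k r q) (.inl p) = (0 : R) := by
  rcases p with (⟨i, s⟩ | ⟨⟩) <;> simp [superGram]

theorem superGram_inr_swap (p p' : (Fin r × Bool) ⊕ Fin q) :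
    superGram (.inr p' : SupIdx k r q) (.inr p) =
      (superGram (.inr p : SupIdx k r q) (.inr p') : R) := by
  rcases p with (⟨j, s⟩ | l) <;> rcases p' with (⟨j', t⟩ | l') <;>
    (try cases s) <;> (try cases t) <;> simp [superGram, blockGram, eq_comm]

@[simp]
theorem superGram_inl_inr (p : (Fin k × Bool) ⊕ Unit) (p' : (Fin r × Bool) ⊕ Fin q) :
    superGram (.inl p : SupIdx k r q) (.inr p') = (0 : R) := by
  rcases p with (⟨i, s⟩ | ⟨⟩) <;> rfl

@[simp]
theorem superGram_inr_inl (p : (Fin r × Bool) ⊕ Fin q) (p' : (Fin k × Bool) ⊕ Unit) :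
    superGram (.inr p : SupIdx k r q) (.inl p') = (0 : R) := by
  rcases p with (⟨i, s⟩ | l) <;> rfl

@[simp]
theorem superGram_center_left (p : SupIdx k r q) :
    superGram (.inl (.inr ())) p = (0 : R) := by
  rcases p with ((⟨i, s⟩ | ⟨⟩) | p) <;> rfl

@[simp]
theorem superGram_center_right (p : SupIdx k r q) :
    superGram p (.inl (.inr ())) = (0 : R) := by
  rcases p with ((⟨i, s⟩ | ⟨⟩) | p) <;> rfl

end Signed

theorem superGram_inl_swap [Ring R] (p p' : (Fin k × Bool) ⊕ Unit) :
    superGram (.inl p' : SupIdx k r q) (.inl p) =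
      -(superGram (.inl p : SupIdx k r q) (.inl p') : R) := by
  rcases p with (⟨i, s⟩ | ⟨⟩) <;> rcases p' with (⟨i', t⟩ | ⟨⟩) <;>
    (try cases s) <;> (try cases t) <;> simp [superGram, eq_comm] <;> split_ifs <;> simp

theorem exists_superGram_dual [Field R] {p₀ : SupIdx k r q} (hp₀ : p₀ ≠ .inl (.inr ())) :
    ∃ p₁, ∃ d : R, d ≠ 0 ∧ ∀ p, superGram p p₁ = if p = p₀ then d else 0 := by
  rcases p₀ with ((⟨i, s⟩ | ⟨⟩) | (⟨j, s⟩ | l))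
  · refine ⟨.inl (.inl (i, !s)), if s then -1 else 1, by cases s <;> simp, ?_⟩
    rintro ((⟨i', t⟩ | ⟨⟩) | (⟨j', t⟩ | l')) <;> cases s <;> (try cases t) <;>
      simp [superGram, eq_comm]
  · exact absurd rfl hp₀
  · refine ⟨.inr (.inl (j, !s)), 1, one_ne_zero, ?_⟩
    rintro ((⟨i', t⟩ | ⟨⟩) | (⟨j', t⟩ | l')) <;> cases s <;> (try cases t) <;>
      simp [superGram, blockGram, eq_comm]
  · refine ⟨.inr (.inr l), 1, one_ne_zero, ?_⟩
    rintro ((⟨i', t⟩ | ⟨⟩) | (⟨j', t⟩ | l')) <;> simp [superGram, blockGram, eq_comm]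

end SuperGram

section HeisenbergBasis

variable {F L : Type*} [Field F] [AddCommGroup L] [Module F L] {k r q : ℕ}
  {φ : L →ₗ[F] L →ₗ[F] F} {E₀ E₁ : Submodule F L}

theorem exists_dual_of_superGram {c : SupIdx k r q → L}
    (hc : ∀ p p', φ (c p) (c p') = superGram p p') (j : SupIdx k r q) (hj : j ≠ .inl (.inr ())) :
    ∃ t d, d ≠ 0 ∧ ∀ i, φ (c i) t = if i = j then d else 0 := by
  obtain ⟨p₁, d, hd, h⟩ := exists_superGram_dual (R := F) hj
  exact ⟨c p₁, d, hd, fun i => (hc i p₁).trans (h i)⟩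

theorem apply_center_eq_zero (b : Basis (SupIdx k r q) F L)
    (hφb : ∀ p p', φ (b p) (b p') = superGram p p') (y : L) :
    φ (b (.inl (.inr ()))) y = 0 ∧ φ y (b (.inl (.inr ()))) = 0 := by
  have hl : φ (b (.inl (.inr ()))) = 0 := b.ext fun p => by simp [hφb]
  have hr : φ.flip (b (.inl (.inr ()))) = 0 := b.ext fun p => by simp [hφb]
  exact ⟨congr($hl y), congr($hr y)⟩

theorem ker_eq_span_center (b : Basis (SupIdx k r q) F L)
    (hφb : ∀ p p', φ (b p) (b p') = superGram p p') :
    LinearMap.ker φ = F ∙ b (.inl (.inr ())) := by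
  refine le_antisymm (ker_le_span_singleton_of_dual φ b (exists_dual_of_superGram hφb)) ?_
  rw [span_singleton_le_iff_mem, LinearMap.mem_ker]
  exact LinearMap.ext fun y => (apply_center_eq_zero b hφb y).1

theorem apply_eq_zero_of_mem_even_odd (b : Basis (SupIdx k r q) F L)
    (hφb : ∀ p p', φ (b p) (b p') = superGram p p') (hE : IsCompl E₀ E₁)
    (heven : ∀ p, b (.inl p) ∈ E₀) (hodd : ∀ p, b (.inr p) ∈ E₁) {x y : L} (hx : x ∈ E₀)
    (hy : y ∈ E₁) : φ x y = 0 ∧ φ y x = 0 := by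
  obtain ⟨h₀, h₁⟩ := span_range_comp_inl_inr_eq b hE heven hodd
  rw [← h₀] at hx
  rw [← h₁] at hy
  exact ⟨apply_eq_zero_of_mem_span φ (by rintro _ ⟨p, rfl⟩ _ ⟨p', rfl⟩; simp [hφb]) hx hy,
    apply_eq_zero_of_mem_span φ (by rintro _ ⟨p, rfl⟩ _ ⟨p', rfl⟩; simp [hφb]) hy hx⟩

theorem apply_swap_of_mem_even (b : Basis (SupIdx k r q) F L)
    (hφb : ∀ p p', φ (b p) (b p') = superGram p p') (hE : IsCompl E₀ E₁)
    (heven : ∀ p, b (.inl p) ∈ E₀) (hodd : ∀ p, b (.inr p) ∈ E₁) {x y : L} (hx : x ∈ E₀)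
    (hy : y ∈ E₀) : φ y x = -1 * φ x y := by
  rw [← (span_range_comp_inl_inr_eq b hE heven hodd).1] at hx hy
  have h := apply_eq_zero_of_mem_span (φ.flip + φ)
    (by
      rintro _ ⟨p, rfl⟩ _ ⟨p', rfl⟩
      simp only [Function.comp_apply, LinearMap.add_apply, LinearMap.flip_apply, hφb,
        superGram_inl_swap p p', neg_add_cancel]) hx hy
  simp only [LinearMap.add_apply, LinearMap.flip_apply] at h
  linear_combination h

theorem apply_self_of_mem_even (b : Basis (SupIdx k r q) F L)
    (hφb : ∀ p p', φ (b p) (b p') = superGram p p') (hE : IsCompl E₀ E₁)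
    (heven : ∀ p, b (.inl p) ∈ E₀) (hodd : ∀ p, b (.inr p) ∈ E₁) {x : L} (hx : x ∈ E₀) :
    φ x x = 0 := by
  have hspan := (span_range_comp_inl_inr_eq b hE heven hodd).1
  refine apply_self_eq_zero_of_mem_span φ (fun x hx y hy => ?_) ?_ (hspan ▸ hx)
  · rw [apply_swap_of_mem_even b hφb hE heven hodd (hspan ▸ hx) (hspan ▸ hy), neg_one_mul]
  · rintro _ ⟨p, rfl⟩
    simp [hφb, superGram_inl_self]

theorem apply_swap_of_mem_odd (b : Basis (SupIdx k r q) F L)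
    (hφb : ∀ p p', φ (b p) (b p') = superGram p p') (hE : IsCompl E₀ E₁)
    (heven : ∀ p, b (.inl p) ∈ E₀) (hodd : ∀ p, b (.inr p) ∈ E₁) {x y : L} (hx : x ∈ E₁)
    (hy : y ∈ E₁) : φ y x = 1 * φ x y := by
  rw [← (span_range_comp_inl_inr_eq b hE heven hodd).2] at hx hy
  have h := apply_eq_zero_of_mem_span (φ.flip - φ)
    (by
      rintro _ ⟨p, rfl⟩ _ ⟨p', rfl⟩
      simp only [Function.comp_apply, LinearMap.sub_apply, LinearMap.flip_apply, hφb]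
      exact sub_eq_zero.2 (superGram_inr_swap p p')) hx hy
  simp only [LinearMap.sub_apply, LinearMap.flip_apply] at h
  linear_combination h

theorem bracket_eq_superGram_smul {k m : ℕ} (b : Basis (SupIdx k 0 m) F L)
    {br : L →ₗ[F] L →ₗ[F] L}
    (hee : ∀ i : Fin k, br (b (.inl (.inl (i, false)))) (b (.inl (.inl (i, true))))
      = b (.inl (.inr ())))
    (heem : ∀ i : Fin k, br (b (.inl (.inl (i, true)))) (b (.inl (.inl (i, false))))
      = -b (.inl (.inr ())))
    (hww : ∀ j : Fin m, br (b (.inr (.inr j))) (b (.inr (.inr j))) = b (.inl (.inr ())))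
    (h0 : ∀ p p' : SupIdx k 0 m, ¬SupPair p p' → br (b p) (b p') = 0) (p p' : SupIdx k 0 m) :
    br (b p) (b p') = (superGram p p' : F) • b (.inl (.inr ())) := by
  by_cases hp : SupPair p p'
  · rcases hp with ⟨i, s, rfl, rfl⟩ | ⟨j, _, _, _⟩ | ⟨l, rfl, rfl⟩
    · cases s <;> simp [superGram, hee, heem]
    · exact j.elim0
    · simp [superGram, blockGram, hww]
  · rw [h0 p p' hp, superGram_eq_zero_of_not_supPair hp, zero_smul]

theorem exists_basis_superGram {G : Type*} {Cg : G → Submodule F L} {z : L}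
    (hE : IsCompl E₀ E₁) (hz : z ≠ 0) (hzE₀ : z ∈ E₀) (hzhom : SetLike.IsHomogeneousElem Cg z)
    (hzφ : ∀ y, φ z y = 0 ∧ φ y z = 0) (hcross : ∀ x ∈ E₀, ∀ y ∈ E₁, φ x y = 0 ∧ φ y x = 0)
    (halt : ∀ x ∈ E₀, φ x x = 0) (h₀ : HasStandardFamily φ Cg (-1) (F ∙ z) E₀)
    (h₁ : HasStandardFamily φ Cg 1 ⊥ E₁) :
    ∃ (k r q : ℕ) (c : Basis (SupIdx k r q) F L), c (.inl (.inr ())) = z ∧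
      (∀ p, SetLike.IsHomogeneousElem Cg (c p)) ∧ (∀ p, c (.inl p) ∈ E₀) ∧
      (∀ p, c (.inr p) ∈ E₁) ∧ ∀ p p', φ (c p) (c p') = superGram p p' := by
  classical
  obtain ⟨k, q₀, e, he, hegram, heSpan⟩ := h₀
  obtain ⟨r, q, w, hw, hwgram, hwSpan⟩ := h₁
  -- an alternating form has no `z_l`
  obtain rfl : q₀ = 0 := by
    by_contra hq
    have h := hegram (.inr ⟨0, Nat.pos_of_ne_zero hq⟩) (.inr ⟨0, Nat.pos_of_ne_zero hq⟩)
    simp [blockGram, halt _ (he _).1] at h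
  let c : SupIdx k r q → L := Sum.elim (Sum.elim (e ∘ .inl) fun _ => z) w
  have hc : ∀ p p', φ (c p) (c p') = superGram p p' := by
    have hew : ∀ p p', φ (e p) (w p') = 0 ∧ φ (w p') (e p) = 0 :=
      fun p p' => hcross _ (he p).1 _ (hw p').1
    rintro ((⟨i, s⟩ | ⟨⟩) | p) ((⟨i', t⟩ | ⟨⟩) | p') <;>
      simp [c, hegram, hwgram, hzφ, hew, superGram, blockGram]
  have hli : LinearIndependent F c :=
    linearIndependent_of_dual φ (i₀ := .inl (.inr ())) hz (exists_dual_of_superGram hc)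
  have hsp : ⊤ ≤ span F (Set.range c) := by
    rw [← hE.sup_eq_top]
    refine sup_le (heSpan.trans (sup_le ?_ ?_)) (hwSpan.trans (sup_le bot_le ?_)) <;>
      refine span_mono ?_
    · exact Set.singleton_subset_iff.2 ⟨.inl (.inr ()), rfl⟩
    · rintro _ ⟨p | l, rfl⟩
      exacts [⟨.inl (.inl p), rfl⟩, l.elim0]
    · exact Set.range_subset_iff.2 fun p => ⟨.inr p, rfl⟩
  refine ⟨k, r, q, Basis.mk hli hsp, ?_, ?_, ?_, ?_, ?_⟩ <;> simp only [Basis.coe_mk]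
  · rfl
  · rintro ((p | ⟨⟩) | p)
    exacts [(he _).2, hzhom, (hw p).2]
  · rintro (p | ⟨⟩)
    exacts [(he _).1, hzE₀]
  · exact fun p => (hw p).1
  · exact hc

variable {G : Type*} [DecidableEq G] {Cg : G → Submodule F L} [Decomposition Cg]

theorem isGradedSymm_even (b : Basis (SupIdx k r q) F L)
    (hφb : ∀ p p', φ (b p) (b p') = superGram p p') (hE : IsCompl E₀ E₁)
    (heven : ∀ p, b (.inl p) ∈ E₀) (hodd : ∀ p, b (.inr p) ∈ E₁)
    (hE₀ : SetLike.IsHomogeneous Cg E₀) : IsGradedSymm φ Cg (-1) (F ∙ b (.inl (.inr ()))) E₀ where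
  homogeneous := hE₀
  symm _ hx _ hy := apply_swap_of_mem_even b hφb hE heven hodd hx hy
  radical_le _ hx hxE₀ := ker_eq_span_center b hφb ▸ mem_ker_of_isCompl φ hE hxE₀
    fun _ hy => (apply_eq_zero_of_mem_even_odd b hφb hE heven hodd hx hy).1

theorem isGradedSymm_odd (b : Basis (SupIdx k r q) F L)
    (hφb : ∀ p p', φ (b p) (b p') = superGram p p') (hE : IsCompl E₀ E₁)
    (heven : ∀ p, b (.inl p) ∈ E₀) (hodd : ∀ p, b (.inr p) ∈ E₁)
    (hE₁ : SetLike.IsHomogeneous Cg E₁) : IsGradedSymm φ Cg 1 ⊥ E₁ where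
  homogeneous := hE₁
  symm _ hx _ hy := apply_swap_of_mem_odd b hφb hE heven hodd hx hy
  radical_le x hx hxE₁ := by
    have hxz : x ∈ F ∙ b (.inl (.inr ())) := ker_eq_span_center b hφb ▸ mem_ker_of_isCompl φ hE
      (fun _ hy => (apply_eq_zero_of_mem_even_odd b hφb hE heven hodd hy hx).2) hxE₁
    rw [← hE.inf_eq_bot]
    exact ⟨span_singleton_le_iff_mem _ _ |>.2 (heven _) hxz, hx⟩

theorem exists_homogeneous_superGram_basis [FiniteDimensional F L] [IsAlgClosed F]
    (b : Basis (SupIdx k r q) F L) (hφb : ∀ p p', φ (b p) (b p') = superGram p p')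
    (hE : IsCompl E₀ E₁) (heven : ∀ p, b (.inl p) ∈ E₀) (hodd : ∀ p, b (.inr p) ∈ E₁)
    (hφ : ∀ w, SetLike.IsHomogeneousElem Cg w →
      SetLike.IsHomogeneous Cg (LinearMap.ker (φ.flip w)))
    (hE₀ : SetLike.IsHomogeneous Cg E₀) (hE₁ : SetLike.IsHomogeneous Cg E₁) :
    ∃ (k' r' q' : ℕ) (c : Basis (SupIdx k' r' q') F L), c (.inl (.inr ())) = b (.inl (.inr ())) ∧
      (∀ p, SetLike.IsHomogeneousElem Cg (c p)) ∧ (∀ p, c (.inl p) ∈ E₀) ∧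
      (∀ p, c (.inr p) ∈ E₁) ∧ ∀ p p', φ (c p) (c p') = superGram p p' :=
  exists_basis_superGram hE (b.ne_zero _) (heven _)
    (isHomogeneousElem_of_isHomogeneous_span_singleton Cg (b.ne_zero _)
      (ker_eq_span_center b hφb ▸ isHomogeneous_ker hφ))
    (apply_center_eq_zero b hφb)
    (fun _ hx _ hy => apply_eq_zero_of_mem_even_odd b hφb hE heven hodd hx hy)
    (fun _ hx => apply_self_of_mem_even b hφb hE heven hodd hx)
    (hasStandardFamily (by norm_num) hφ (isGradedSymm_even b hφb hE heven hodd hE₀))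
    (hasStandardFamily (by norm_num) hφ (isGradedSymm_odd b hφb hE heven hodd hE₁))

end HeisenbergBasis

theorem heisenberg_superalgebra_grading_homogeneous_basis_general
    (F : Type*) [Field F] [IsAlgClosed F]
    (L : Type*) [AddCommGroup L] [Module F L]
    (E0 E1 : Submodule F L) (hcompl : IsCompl E0 E1)
    (k m : ℕ)
    -- the standard basis of `H_{n,m}`: even `{e_i, ê_i, z}`, odd `{w_1,…,w_m}`
    (b : Module.Basis (SupIdx k 0 m) F L)
    (heven : ∀ p : (Fin k × Bool) ⊕ Unit, b (Sum.inl p) ∈ E0)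
    (hodd : ∀ p : (Fin 0 × Bool) ⊕ Fin m, b (Sum.inr p) ∈ E1)
    (br : L →ₗ[F] L →ₗ[F] L)
    (hee : ∀ i : Fin k, br (b (Sum.inl (Sum.inl (i, false)))) (b (Sum.inl (Sum.inl (i, true))))
      = b (Sum.inl (Sum.inr ())))
    (heem : ∀ i : Fin k, br (b (Sum.inl (Sum.inl (i, true)))) (b (Sum.inl (Sum.inl (i, false))))
      = -b (Sum.inl (Sum.inr ())))
    (hww : ∀ j : Fin m, br (b (Sum.inr (Sum.inr j))) (b (Sum.inr (Sum.inr j)))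
      = b (Sum.inl (Sum.inr ())))
    (h0 : ∀ p p' : SupIdx k 0 m, ¬ SupPair p p' → br (b p) (b p') = 0)
    -- a group grading of the superalgebra
    (G : Type*) [AddCommGroup G] [DecidableEq G]
    (Cg : G → Submodule F L) (hint : DirectSum.IsInternal Cg)
    (hgr : ∀ (g h : G) (x y : L), x ∈ Cg g → y ∈ Cg h → br x y ∈ Cg (g + h))
    (hrefine : ∀ g : G, Cg g = (Cg g ⊓ E0) ⊔ (Cg g ⊓ E1)) :
    ∃ (r q : ℕ), 2 * r + q = m ∧
      ∃ c : Module.Basis (SupIdx k r q) F L,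
        c (Sum.inl (Sum.inr ())) = b (Sum.inl (Sum.inr ())) ∧
        (∀ p : SupIdx k r q, ∃ g : G, c p ∈ Cg g) ∧
        (∀ p : (Fin k × Bool) ⊕ Unit, c (Sum.inl p) ∈ E0) ∧
        (∀ p : (Fin r × Bool) ⊕ Fin q, c (Sum.inr p) ∈ E1) ∧
        (∀ i : Fin k, br (c (Sum.inl (Sum.inl (i, false)))) (c (Sum.inl (Sum.inl (i, true))))
          = b (Sum.inl (Sum.inr ()))) ∧
        (∀ j : Fin r, br (c (Sum.inr (Sum.inl (j, false)))) (c (Sum.inr (Sum.inl (j, true))))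
          = b (Sum.inl (Sum.inr ()))) ∧
        (∀ l : Fin q, br (c (Sum.inr (Sum.inr l))) (c (Sum.inr (Sum.inr l)))
          = b (Sum.inl (Sum.inr ()))) ∧
        (∀ p p' : SupIdx k r q, ¬ SupPair p p' → br (c p) (c p') = 0) := by
  classical
  have : FiniteDimensional F L := .of_basis b
  let := hint.chooseDecomposition
  have hb := bracket_eq_superGram_smul b hee heem hww h0
  set φ := br.compr₂ (b.coord (.inl (.inr ())))
  have hbr := eq_compr₂_coord_smul b _ hb
  have hφb : ∀ p p', φ (b p) (b p') = superGram p p' := fun p p' => by simp [φ, hb]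
  obtain ⟨k', r, q, c, hcz, hchom, hc₀, hc₁, hcgram⟩ := exists_homogeneous_superGram_basis b hφb
    hcompl heven hodd (isHomogeneous_ker_flip_of_eq_smul hgr hbr (b.ne_zero _))
    (isHomogeneous_of_isCompl Cg hcompl fun g => (hrefine g).le)
    (isHomogeneous_of_isCompl Cg hcompl.symm fun g => (hrefine g).trans_le (sup_comm _ _).le)
  obtain rfl : k' = k := by
    have h := (finrank_eq_card_of_isCompl c hcompl hc₀ hc₁).symm.trans
      (finrank_eq_card_of_isCompl b hcompl heven hodd)
    simpa using h
  refine ⟨r, q, ?_, c, hcz, hchom, hc₀, hc₁, fun i => ?_, fun j => ?_, fun l => ?_,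
    fun p p' hp => ?_⟩
  · have h := (finrank_eq_card_basis c).symm.trans (finrank_eq_card_basis b)
    simp at h
    omega
  all_goals rw [hbr, hcgram]
  · simp [superGram]
  · simp [superGram, blockGram]
  · simp [superGram, blockGram]
  · rw [superGram_eq_zero_of_not_supPair hp, zero_smul]

/-- For any group grading (as a superalgebra) of the Heisenberg superalgebra
`H_{n,m}` (`n = 2k+1`, odd dimension `m`, char F ≠ 2, F algebraically
closed), there exist `r, q` with `2r + q = m` and a homogeneous basis
`{z, e_i, ê_i, u_j, v_j, z_l}` whose only nonzero brackets are
`[e_i,ê_i] = [u_j,v_j] = [z_l,z_l] = z` (together with the brackets forced by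
super (anti)symmetry). -/
theorem heisenberg_superalgebra_grading_homogeneous_basis
    (F : Type*) [Field F] [IsAlgClosed F] (hchar : (2 : F) ≠ 0)
    (L : Type*) [AddCommGroup L] [Module F L]
    (E0 E1 : Submodule F L) (hcompl : IsCompl E0 E1)
    (k m : ℕ)
    -- the standard basis of `H_{n,m}`: even `{e_i, ê_i, z}`, odd `{w_1,…,w_m}`
    (b : Module.Basis (SupIdx k 0 m) F L)
    (heven : ∀ p : (Fin k × Bool) ⊕ Unit, b (Sum.inl p) ∈ E0)
    (hodd : ∀ p : (Fin 0 × Bool) ⊕ Fin m, b (Sum.inr p) ∈ E1)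
    (br : L →ₗ[F] L →ₗ[F] L)
    (hee : ∀ i : Fin k, br (b (Sum.inl (Sum.inl (i, false)))) (b (Sum.inl (Sum.inl (i, true))))
      = b (Sum.inl (Sum.inr ())))
    (heem : ∀ i : Fin k, br (b (Sum.inl (Sum.inl (i, true)))) (b (Sum.inl (Sum.inl (i, false))))
      = -b (Sum.inl (Sum.inr ())))
    (hww : ∀ j : Fin m, br (b (Sum.inr (Sum.inr j))) (b (Sum.inr (Sum.inr j)))
      = b (Sum.inl (Sum.inr ())))
    (h0 : ∀ p p' : SupIdx k 0 m, ¬ SupPair p p' → br (b p) (b p') = 0)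
    -- a group grading of the superalgebra
    (G : Type*) [AddCommGroup G] [DecidableEq G]
    (Cg : G → Submodule F L) (hint : DirectSum.IsInternal Cg)
    (hgr : ∀ (g h : G) (x y : L), x ∈ Cg g → y ∈ Cg h → br x y ∈ Cg (g + h))
    (hrefine : ∀ g : G, Cg g = (Cg g ⊓ E0) ⊔ (Cg g ⊓ E1)) :
    ∃ (r q : ℕ), 2 * r + q = m ∧
      ∃ c : Module.Basis (SupIdx k r q) F L,
        c (Sum.inl (Sum.inr ())) = b (Sum.inl (Sum.inr ())) ∧
        (∀ p : SupIdx k r q, ∃ g : G, c p ∈ Cg g) ∧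
        (∀ p : (Fin k × Bool) ⊕ Unit, c (Sum.inl p) ∈ E0) ∧
        (∀ p : (Fin r × Bool) ⊕ Fin q, c (Sum.inr p) ∈ E1) ∧
        (∀ i : Fin k, br (c (Sum.inl (Sum.inl (i, false)))) (c (Sum.inl (Sum.inl (i, true))))
          = b (Sum.inl (Sum.inr ()))) ∧
        (∀ j : Fin r, br (c (Sum.inr (Sum.inl (j, false)))) (c (Sum.inr (Sum.inl (j, true))))
          = b (Sum.inl (Sum.inr ()))) ∧
        (∀ l : Fin q, br (c (Sum.inr (Sum.inr l))) (c (Sum.inr (Sum.inr l)))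
          = b (Sum.inl (Sum.inr ()))) ∧
        (∀ p p' : SupIdx k r q, ¬ SupPair p p' → br (c p) (c p') = 0) :=
  heisenberg_superalgebra_grading_homogeneous_basis_general F L E0 E1 hcompl k m b heven hodd br hee
    heem hww h0 G Cg hint hgr hrefine
end
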